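/- arXiv:alg-geom/9410028 — 4 statements merged into one kernel-verified Lean document; each statement's English description precedes it below -/
import Mathlib

section
/- In the Picard lattice of the cubic surface there are exactly 27 line classes; that is, the set {x ∈ Λ : ⟨x,x⟩ = −1 and ⟨x,K⟩ = −1} is finite of cardinality 27. -/
/-- The Picard lattice of the cubic surface: free ℤ-module of rank 7
with basis h, e₁, …, e₆ (coordinates: index 0 ↦ coefficient of h,
index i+1 ↦ coefficient of eᵢ). -/
abbrev Lam : Type := Fin 7 → ℤ

/-- The intersection form: ⟨h,h⟩ = 1, ⟨eᵢ,eᵢ⟩ = −1, distinct basis vectors orthogonal. -/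
def ip (x y : Lam) : ℤ := x 0 * y 0 - ∑ i : Fin 6, x i.succ * y i.succ

/-- The canonical class K = −3h + e₁ + ⋯ + e₆. -/
def Kc : Lam := ![-3, 1, 1, 1, 1, 1, 1]

/-- A line class: x with ⟨x,x⟩ = −1 and ⟨x,K⟩ = −1. -/
def IsLine (x : Lam) : Prop := ip x x = -1 ∧ ip x Kc = -1

/-- A fiber class: x with ⟨x,x⟩ = 0 and ⟨x,K⟩ = −2. -/
def IsFiber (x : Lam) : Prop := ip x x = 0 ∧ ip x Kc = -2

lemma cauchy5 (c1 c2 c3 c4 c5 : ℤ) :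
    (c1+c2+c3+c4+c5)^2 ≤ 5*(c1*c1+c2*c2+c3*c3+c4*c4+c5*c5) := by
  linarith [sq_nonneg (c1-c2), sq_nonneg (c1-c3), sq_nonneg (c1-c4), sq_nonneg (c1-c5),
    sq_nonneg (c2-c3), sq_nonneg (c2-c4), sq_nonneg (c2-c5), sq_nonneg (c3-c4),
    sq_nonneg (c3-c5), sq_nonneg (c4-c5)]

lemma bbound (a b : ℤ) (hq : (1-3*a-b)^2 ≤ 5*(a*a+1-b*b)) (ha0 : 0 ≤ a) (ha2 : a ≤ 2) :
    -1 ≤ b ∧ b ≤ 1 := by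
  constructor
  · by_contra h
    push_neg at h
    have hb : b ≤ -2 := by omega
    nlinarith [sq_nonneg (b+2), mul_nonneg ha0 (by linarith : (0:ℤ) ≤ 2 - a),
      mul_nonneg (by linarith : (0:ℤ) ≤ -2 - b) ha0]
  · by_contra h
    push_neg at h
    have hb : 2 ≤ b := by omega
    nlinarith [sq_nonneg (b-2), mul_nonneg ha0 (by linarith : (0:ℤ) ≤ 2 - a),
      mul_nonneg (by linarith : (0:ℤ) ≤ b - 2) ha0]

lemma seven_bounds (a b1 b2 b3 b4 b5 b6 : ℤ)
    (h1 : a*a - (b1*b1+b2*b2+b3*b3+b4*b4+b5*b5+b6*b6) = -1)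
    (h2 : -(a*3) - (b1+b2+b3+b4+b5+b6) = -1) :
    (0 ≤ a ∧ a ≤ 2) ∧ (-1 ≤ b1 ∧ b1 ≤ 1) ∧ (-1 ≤ b2 ∧ b2 ≤ 1) ∧ (-1 ≤ b3 ∧ b3 ≤ 1)
      ∧ (-1 ≤ b4 ∧ b4 ≤ 1) ∧ (-1 ≤ b5 ∧ b5 ≤ 1) ∧ (-1 ≤ b6 ∧ b6 ≤ 1) := by
  have cauchy : (b1+b2+b3+b4+b5+b6)^2 ≤ 6*(b1*b1+b2*b2+b3*b3+b4*b4+b5*b5+b6*b6) := by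
    linarith [sq_nonneg (b1-b2), sq_nonneg (b1-b3), sq_nonneg (b1-b4), sq_nonneg (b1-b5),
      sq_nonneg (b1-b6), sq_nonneg (b2-b3), sq_nonneg (b2-b4), sq_nonneg (b2-b5),
      sq_nonneg (b2-b6), sq_nonneg (b3-b4), sq_nonneg (b3-b5), sq_nonneg (b3-b6),
      sq_nonneg (b4-b5), sq_nonneg (b4-b6), sq_nonneg (b5-b6)]
  have hsum : b1+b2+b3+b4+b5+b6 = 1 - 3*a := by linarith
  have hsq : b1*b1+b2*b2+b3*b3+b4*b4+b5*b5+b6*b6 = a*a + 1 := by linarith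
  have hq : (1-3*a)^2 ≤ 6*(a*a+1) := by rw [← hsum, ← hsq]; exact cauchy
  have ha0 : 0 ≤ a := by nlinarith
  have ha2 : a ≤ 2 := by nlinarith
  refine ⟨⟨ha0, ha2⟩, ?_, ?_, ?_, ?_, ?_, ?_⟩
  · have c := cauchy5 b2 b3 b4 b5 b6
    have e : b2+b3+b4+b5+b6 = 1-3*a-b1 := by linarith
    have e2 : b2*b2+b3*b3+b4*b4+b5*b5+b6*b6 = a*a+1-b1*b1 := by linarith
    rw [e, e2] at c
    exact bbound a b1 c ha0 ha2
  · have c := cauchy5 b1 b3 b4 b5 b6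
    have e : b1+b3+b4+b5+b6 = 1-3*a-b2 := by linarith
    have e2 : b1*b1+b3*b3+b4*b4+b5*b5+b6*b6 = a*a+1-b2*b2 := by linarith
    rw [e, e2] at c
    exact bbound a b2 c ha0 ha2
  · have c := cauchy5 b1 b2 b4 b5 b6
    have e : b1+b2+b4+b5+b6 = 1-3*a-b3 := by linarith
    have e2 : b1*b1+b2*b2+b4*b4+b5*b5+b6*b6 = a*a+1-b3*b3 := by linarith
    rw [e, e2] at c
    exact bbound a b3 c ha0 ha2
  · have c := cauchy5 b1 b2 b3 b5 b6
    have e : b1+b2+b3+b5+b6 = 1-3*a-b4 := by linarith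
    have e2 : b1*b1+b2*b2+b3*b3+b5*b5+b6*b6 = a*a+1-b4*b4 := by linarith
    rw [e, e2] at c
    exact bbound a b4 c ha0 ha2
  · have c := cauchy5 b1 b2 b3 b4 b6
    have e : b1+b2+b3+b4+b6 = 1-3*a-b5 := by linarith
    have e2 : b1*b1+b2*b2+b3*b3+b4*b4+b6*b6 = a*a+1-b5*b5 := by linarith
    rw [e, e2] at c
    exact bbound a b5 c ha0 ha2
  · have c := cauchy5 b1 b2 b3 b4 b5
    have e : b1+b2+b3+b4+b5 = 1-3*a-b6 := by linarith
    have e2 : b1*b1+b2*b2+b3*b3+b4*b4+b5*b5 = a*a+1-b6*b6 := by linarith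
    rw [e, e2] at c
    exact bbound a b6 c ha0 ha2

/-- Candidate finset containing all line classes. -/
noncomputable def lineFinset : Finset Lam :=
  (Fintype.piFinset fun i : Fin 7 =>
    if i = 0 then Finset.Icc (0:ℤ) 2 else Finset.Icc (-1:ℤ) 1).filter
    fun x => ip x x = -1 ∧ ip x Kc = -1

lemma line_mem (x : Lam) (hx : IsLine x) : x ∈ lineFinset := by
  obtain ⟨h1, h2⟩ := hx
  have h1' := h1
  have h2' := h2
  simp only [ip, Kc, Fin.sum_univ_six] at h1' h2'
  norm_num [Fin.succ] at h1' h2'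
  have hb := seven_bounds (x 0) (x 1) (x 2) (x 3) (x 4) (x 5) (x 6) h1' h2'
  obtain ⟨⟨ha0, ha2⟩, ⟨l1, u1⟩, ⟨l2, u2⟩, ⟨l3, u3⟩, ⟨l4, u4⟩, ⟨l5, u5⟩, ⟨l6, u6⟩⟩ := hb
  simp only [lineFinset, Finset.mem_filter, Fintype.mem_piFinset]
  refine ⟨fun i => ?_, h1, h2⟩
  fin_cases i <;> simp <;> omega

set_option maxHeartbeats 4000000 in
set_option maxRecDepth 100000 in
lemma lineFinset_card : lineFinset.card = 27 := by decide

lemma line_set_eq : {x : Lam | IsLine x} = ↑lineFinset := by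
  ext x
  constructor
  · exact fun hx => line_mem x hx
  · intro hx
    exact (Finset.mem_filter.mp hx).2

/-- There are exactly 27 line classes in the Picard lattice of the cubic surface. -/
theorem twentyseven_lines :
    {x : Lam | IsLine x}.Finite ∧ {x : Lam | IsLine x}.ncard = 27 := by
  rw [line_set_eq]
  exact ⟨lineFinset.finite_toSet, by rw [Set.ncard_coe_finset]; exact lineFinset_card⟩
end

section
/- For any two fiber classes F and G one has 0 ≤ ⟨F,G⟩ ≤ 2, and ⟨F,G⟩ = 0 if and only if F = G. -/
lemma ip_expand (x y : Lam) : ip x y =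
    x 0 * y 0 - (x 1 * y 1 + x 2 * y 2 + x 3 * y 3 + x 4 * y 4 + x 5 * y 5 + x 6 * y 6) := by
  simp [ip, Fin.sum_univ_six]

lemma ip_K (x : Lam) : ip x Kc = -3 * x 0 - (x 1 + x 2 + x 3 + x 4 + x 5 + x 6) := by
  rw [ip_expand, show Kc 0 = -3 from rfl, show Kc 1 = 1 from rfl, show Kc 2 = 1 from rfl,
    show Kc 3 = 1 from rfl, show Kc 4 = 1 from rfl, show Kc 5 = 1 from rfl,
    show Kc 6 = 1 from rfl]
  ring

/-- For fiber classes F, G: 0 ≤ ⟨F,G⟩ ≤ 2, and ⟨F,G⟩ = 0 iff F = G. -/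
theorem fiber_pairing_bounds :
    ∀ F G : Lam, IsFiber F → IsFiber G →
      (0 ≤ ip F G ∧ ip F G ≤ 2) ∧ (ip F G = 0 ↔ F = G) := by
  intro F G hF hG
  obtain ⟨hF1, hF2⟩ := hF
  obtain ⟨hG1, hG2⟩ := hG
  rw [ip_expand] at hF1 hG1
  rw [ip_K] at hF2 hG2
  rw [ip_expand]
  have hx : 3 * (F 0 - G 0) + ((F 1 - G 1) + (F 2 - G 2) + (F 3 - G 3) + (F 4 - G 4)
      + (F 5 - G 5) + (F 6 - G 6)) = 0 := by linarith
  have hy : 3 * (F 0 + G 0) + ((F 1 + G 1) + (F 2 + G 2) + (F 3 + G 3) + (F 4 + G 4)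
      + (F 5 + G 5) + (F 6 + G 6)) = 4 := by linarith
  have key : 12 * (F 0 * G 0 -
      (F 1 * G 1 + F 2 * G 2 + F 3 * G 3 + F 4 * G 4 + F 5 * G 5 + F 6 * G 6)) =
      3 * (F 0 - G 0) ^ 2 +
      (((F 1 - G 1) - (F 2 - G 2)) ^ 2 + ((F 1 - G 1) - (F 3 - G 3)) ^ 2 +
       ((F 1 - G 1) - (F 4 - G 4)) ^ 2 + ((F 1 - G 1) - (F 5 - G 5)) ^ 2 +
       ((F 1 - G 1) - (F 6 - G 6)) ^ 2 + ((F 2 - G 2) - (F 3 - G 3)) ^ 2 +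
       ((F 2 - G 2) - (F 4 - G 4)) ^ 2 + ((F 2 - G 2) - (F 5 - G 5)) ^ 2 +
       ((F 2 - G 2) - (F 6 - G 6)) ^ 2 + ((F 3 - G 3) - (F 4 - G 4)) ^ 2 +
       ((F 3 - G 3) - (F 5 - G 5)) ^ 2 + ((F 3 - G 3) - (F 6 - G 6)) ^ 2 +
       ((F 4 - G 4) - (F 5 - G 5)) ^ 2 + ((F 4 - G 4) - (F 6 - G 6)) ^ 2 +
       ((F 5 - G 5) - (F 6 - G 6)) ^ 2) := by
    linear_combination 6 * hF1 + 6 * hG1 +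
      (((F 1 - G 1) + (F 2 - G 2) + (F 3 - G 3) + (F 4 - G 4) + (F 5 - G 5) + (F 6 - G 6))
        - 3 * (F 0 - G 0)) * hx
  have key2 : 12 * (F 0 * G 0 -
      (F 1 * G 1 + F 2 * G 2 + F 3 * G 3 + F 4 * G 4 + F 5 * G 5 + F 6 * G 6)) +
      3 * (F 0 + G 0 - 4) ^ 2 +
      (((F 1 + G 1) - (F 2 + G 2)) ^ 2 + ((F 1 + G 1) - (F 3 + G 3)) ^ 2 +
       ((F 1 + G 1) - (F 4 + G 4)) ^ 2 + ((F 1 + G 1) - (F 5 + G 5)) ^ 2 +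
       ((F 1 + G 1) - (F 6 + G 6)) ^ 2 + ((F 2 + G 2) - (F 3 + G 3)) ^ 2 +
       ((F 2 + G 2) - (F 4 + G 4)) ^ 2 + ((F 2 + G 2) - (F 5 + G 5)) ^ 2 +
       ((F 2 + G 2) - (F 6 + G 6)) ^ 2 + ((F 3 + G 3) - (F 4 + G 4)) ^ 2 +
       ((F 3 + G 3) - (F 5 + G 5)) ^ 2 + ((F 3 + G 3) - (F 6 + G 6)) ^ 2 +
       ((F 4 + G 4) - (F 5 + G 5)) ^ 2 + ((F 4 + G 4) - (F 6 + G 6)) ^ 2 +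
       ((F 5 + G 5) - (F 6 + G 6)) ^ 2) = 32 := by
    linear_combination (-6 : ℤ) * hF1 - 6 * hG1 +
      (3 * (F 0 + G 0) - 4 - ((F 1 + G 1) + (F 2 + G 2) + (F 3 + G 3) + (F 4 + G 4)
        + (F 5 + G 5) + (F 6 + G 6))) * hy
  have sq1 := sq_nonneg ((F 1 - G 1) - (F 2 - G 2))
  have sq2 := sq_nonneg ((F 1 - G 1) - (F 3 - G 3))
  have sq3 := sq_nonneg ((F 1 - G 1) - (F 4 - G 4))
  have sq4 := sq_nonneg ((F 1 - G 1) - (F 5 - G 5))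
  have sq5 := sq_nonneg ((F 1 - G 1) - (F 6 - G 6))
  have sq6 := sq_nonneg ((F 2 - G 2) - (F 3 - G 3))
  have sq7 := sq_nonneg ((F 2 - G 2) - (F 4 - G 4))
  have sq8 := sq_nonneg ((F 2 - G 2) - (F 5 - G 5))
  have sq9 := sq_nonneg ((F 2 - G 2) - (F 6 - G 6))
  have sq10 := sq_nonneg ((F 3 - G 3) - (F 4 - G 4))
  have sq11 := sq_nonneg ((F 3 - G 3) - (F 5 - G 5))
  have sq12 := sq_nonneg ((F 3 - G 3) - (F 6 - G 6))
  have sq13 := sq_nonneg ((F 4 - G 4) - (F 5 - G 5))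
  have sq14 := sq_nonneg ((F 4 - G 4) - (F 6 - G 6))
  have sq15 := sq_nonneg ((F 5 - G 5) - (F 6 - G 6))
  have sq0 := sq_nonneg (F 0 - G 0)
  have hlow : 0 ≤ F 0 * G 0 -
      (F 1 * G 1 + F 2 * G 2 + F 3 * G 3 + F 4 * G 4 + F 5 * G 5 + F 6 * G 6) := by
    linarith
  have hhigh : F 0 * G 0 -
      (F 1 * G 1 + F 2 * G 2 + F 3 * G 3 + F 4 * G 4 + F 5 * G 5 + F 6 * G 6) ≤ 2 := by
    have t1 := sq_nonneg ((F 1 + G 1) - (F 2 + G 2))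
    have t2 := sq_nonneg ((F 1 + G 1) - (F 3 + G 3))
    have t3 := sq_nonneg ((F 1 + G 1) - (F 4 + G 4))
    have t4 := sq_nonneg ((F 1 + G 1) - (F 5 + G 5))
    have t5 := sq_nonneg ((F 1 + G 1) - (F 6 + G 6))
    have t6 := sq_nonneg ((F 2 + G 2) - (F 3 + G 3))
    have t7 := sq_nonneg ((F 2 + G 2) - (F 4 + G 4))
    have t8 := sq_nonneg ((F 2 + G 2) - (F 5 + G 5))
    have t9 := sq_nonneg ((F 2 + G 2) - (F 6 + G 6))
    have t10 := sq_nonneg ((F 3 + G 3) - (F 4 + G 4))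
    have t11 := sq_nonneg ((F 3 + G 3) - (F 5 + G 5))
    have t12 := sq_nonneg ((F 3 + G 3) - (F 6 + G 6))
    have t13 := sq_nonneg ((F 4 + G 4) - (F 5 + G 5))
    have t14 := sq_nonneg ((F 4 + G 4) - (F 6 + G 6))
    have t15 := sq_nonneg ((F 5 + G 5) - (F 6 + G 6))
    have t0 := sq_nonneg (F 0 + G 0 - 4)
    have h12 : 12 * (F 0 * G 0 -
        (F 1 * G 1 + F 2 * G 2 + F 3 * G 3 + F 4 * G 4 + F 5 * G 5 + F 6 * G 6)) ≤ 32 := by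
      linarith
    omega
  refine ⟨⟨hlow, hhigh⟩, ?_, ?_⟩
  · intro hP
    have e0 : (F 0 - G 0) ^ 2 = 0 := le_antisymm (by linarith) sq0
    have h0 : F 0 = G 0 := by
      have := sq_eq_zero_iff.mp e0; linarith
    have hsum : (F 1 - G 1) ^ 2 + (F 2 - G 2) ^ 2 + (F 3 - G 3) ^ 2 + (F 4 - G 4) ^ 2
        + (F 5 - G 5) ^ 2 + (F 6 - G 6) ^ 2 = 0 := by
      linear_combination (-1 : ℤ) * hF1 - hG1 + 2 * hP + (F 0 - G 0) * h0
    have u1 := sq_nonneg (F 1 - G 1)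
    have u2 := sq_nonneg (F 2 - G 2)
    have u3 := sq_nonneg (F 3 - G 3)
    have u4 := sq_nonneg (F 4 - G 4)
    have u5 := sq_nonneg (F 5 - G 5)
    have u6 := sq_nonneg (F 6 - G 6)
    have h1 : F 1 = G 1 := by
      have e : (F 1 - G 1) ^ 2 = 0 := le_antisymm (by linarith) u1
      have := sq_eq_zero_iff.mp e; linarith
    have h2 : F 2 = G 2 := by
      have e : (F 2 - G 2) ^ 2 = 0 := le_antisymm (by linarith) u2
      have := sq_eq_zero_iff.mp e; linarith
    have h3 : F 3 = G 3 := by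
      have e : (F 3 - G 3) ^ 2 = 0 := le_antisymm (by linarith) u3
      have := sq_eq_zero_iff.mp e; linarith
    have h4 : F 4 = G 4 := by
      have e : (F 4 - G 4) ^ 2 = 0 := le_antisymm (by linarith) u4
      have := sq_eq_zero_iff.mp e; linarith
    have h5 : F 5 = G 5 := by
      have e : (F 5 - G 5) ^ 2 = 0 := le_antisymm (by linarith) u5
      have := sq_eq_zero_iff.mp e; linarith
    have h6 : F 6 = G 6 := by
      have e : (F 6 - G 6) ^ 2 = 0 := le_antisymm (by linarith) u6
      have := sq_eq_zero_iff.mp e; linarith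
    funext i
    fin_cases i
    · exact h0
    · exact h1
    · exact h2
    · exact h3
    · exact h4
    · exact h5
    · exact h6
  · rintro rfl
    linarith
end

section
/- There are exactly 27 elements C ∈ Λ with ⟨C,C⟩ = 4 and ⟨C,K⟩ = −4, and each such C is of the form C = −K + E for a unique line class E; conversely −K + E has these properties for every line class E. -/
/-!
Since `⟨C + K, C + K⟩ = ⟨C, C⟩ + 2⟨C, K⟩ + 3` and `⟨C + K, K⟩ = ⟨C, K⟩ + 3`, translation by `K`
maps the classes in question bijectively onto the line classes. A line class
`a h + b₁ e₁ + ⋯ + b₆ e₆` has `∑ bᵢ = 1 - 3a` and `∑ bᵢ² = a² + 1`, so Cauchy–Schwarz gives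
`0 ≤ a ≤ 2`, and then every `|bᵢ| ≤ 1`; the line classes in this finite box are counted directly.
-/

lemma ip_comm (x y : Lam) : ip x y = ip y x := by
  simp only [ip, mul_comm]

lemma ip_add_left (x y z : Lam) : ip (x + y) z = ip x z + ip y z := by
  simp only [ip, Pi.add_apply, add_mul, Finset.sum_add_distrib]
  ring

lemma ip_add_self (x y : Lam) : ip (x + y) (x + y) = ip x x + 2 * ip x y + ip y y := by
  rw [ip_add_left, ip_comm x, ip_comm y, ip_add_left, ip_add_left, ip_comm y x]
  ring

lemma ip_Kc_self : ip Kc Kc = 3 := by decide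

lemma ip_Kc (x : Lam) : ip x Kc = -3 * x 0 - ∑ i : Fin 6, x i.succ := by
  have hKc : ∀ i : Fin 6, Kc i.succ = 1 := by decide
  simp only [ip, hKc, mul_one]
  rw [show Kc 0 = -3 from rfl, mul_comm]

lemma isLine_Kc_add_iff (C : Lam) : IsLine (Kc + C) ↔ ip C C = 4 ∧ ip C Kc = -4 := by
  rw [IsLine, ip_add_self, ip_add_left, ip_Kc_self, ip_comm Kc C]
  omega

lemma setOf_ip_eq_image :
    {C : Lam | ip C C = 4 ∧ ip C Kc = -4} = (-Kc + ·) '' {E | IsLine E} := by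
  rw [Set.image_add_left, neg_neg]
  ext C
  exact (isLine_Kc_add_iff C).symm

instance : DecidablePred IsLine := fun x =>
  inferInstanceAs (Decidable (ip x x = -1 ∧ ip x Kc = -1))

def lineBox : Finset Lam := Fintype.piFinset (Fin.cons {0, 1, 2} fun _ => {-1, 0, 1})

lemma IsLine.mem_lineBox {x : Lam} (hx : IsLine x) : x ∈ lineBox := by
  set a := x 0
  set b : Fin 6 → ℤ := fun i => x i.succ
  have hsq : ∑ i, b i * b i = a * a + 1 := by have := hx.1; simp only [ip] at this; linarith
  have hsum : ∑ i, b i = 1 - 3 * a := by have := hx.2; rw [ip_Kc] at this; linarith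
  have hcs : (∑ i, b i) * ∑ i, b i ≤ 6 * ∑ i, b i * b i := by
    simpa [sq] using sq_sum_le_card_mul_sum_sq (s := Finset.univ) (f := b)
  have ha : 0 ≤ a ∧ a ≤ 2 := by constructor <;> nlinarith
  -- `n (n - 1)` and `n (n + 1)` are nonnegative on ℤ, and their sums over the `bᵢ` are
  -- `a (a + 3)` and `(a - 1)(a - 2)`, which vanish for `a = 0` resp. `a ∈ {1, 2}`.
  have hlow : ∀ i, b i * (b i - 1) ≤ a * (a + 3) := fun i => by
    have hle := Finset.single_le_sum (f := fun j => b j * (b j - 1))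
      (fun j _ => by rcases le_or_gt (b j) 0 with h | h <;> nlinarith) (Finset.mem_univ i)
    simp only [mul_sub, mul_one, Finset.sum_sub_distrib, hsq, hsum] at hle
    linarith
  have hhigh : ∀ i, b i * (b i + 1) ≤ (a - 1) * (a - 2) := fun i => by
    have hle := Finset.single_le_sum (f := fun j => b j * (b j + 1))
      (fun j _ => by rcases le_or_gt (b j) (-1) with h | h <;> nlinarith) (Finset.mem_univ i)
    simp only [mul_add, mul_one, Finset.sum_add_distrib, hsq, hsum] at hle
    linarith
  rw [lineBox, Fintype.mem_piFinset, Fin.forall_fin_succ]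
  simp only [Fin.cons_zero, Fin.cons_succ, Finset.mem_insert, Finset.mem_singleton]
  refine ⟨by omega, fun i => show b i = -1 ∨ b i = 0 ∨ b i = 1 from ?_⟩
  have hl := hlow i
  have hh := hhigh i
  have hbi : -1 ≤ b i ∧ b i ≤ 1 := by
    obtain ⟨ha0, ha2⟩ := ha
    interval_cases a <;> constructor <;> nlinarith
  omega

lemma coe_filter_isLine_lineBox : ↑{x ∈ lineBox | IsLine x} = {E : Lam | IsLine E} := by
  ext x
  simpa using IsLine.mem_lineBox

lemma finite_setOf_isLine : {E : Lam | IsLine E}.Finite :=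
  coe_filter_isLine_lineBox ▸ Finset.finite_toSet _

-- The 27 lines are `eᵢ`, `h - eᵢ - eⱼ` and `2h - (e₁ + ⋯ + e₆) + eᵢ`.
lemma ncard_setOf_isLine : {E : Lam | IsLine E}.ncard = 27 := by
  rw [← coe_filter_isLine_lineBox, Set.ncard_coe_finset]
  decide +kernel

/-- There are exactly 27 classes C with ⟨C,C⟩ = 4, ⟨C,K⟩ = −4; each is −K + E for a
unique line class E, and conversely −K + E always has these properties. -/
theorem antiK_plus_line_classes :
    {C : Lam | ip C C = 4 ∧ ip C Kc = -4}.Finite ∧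
    {C : Lam | ip C C = 4 ∧ ip C Kc = -4}.ncard = 27 ∧
    (∀ C : Lam, ip C C = 4 → ip C Kc = -4 → ∃! E : Lam, IsLine E ∧ C = -Kc + E) ∧
    (∀ E : Lam, IsLine E → ip (-Kc + E) (-Kc + E) = 4 ∧ ip (-Kc + E) Kc = -4) := by
  refine ⟨?_, ?_, fun C h₁ h₂ => ?_, fun E hE => ?_⟩
  · rw [setOf_ip_eq_image]
    exact finite_setOf_isLine.image _
  · rw [setOf_ip_eq_image, Set.ncard_image_of_injective _ (add_right_injective _),
      ncard_setOf_isLine]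
  · refine ⟨Kc + C, ⟨(isLine_Kc_add_iff C).2 ⟨h₁, h₂⟩, (neg_add_cancel_left _ _).symm⟩, ?_⟩
    rintro E ⟨-, rfl⟩
    exact (add_neg_cancel_left _ _).symm
  · rw [← isLine_Kc_add_iff, add_neg_cancel_left]
    exact hE
end

section
/- For every line class E′ the following identity holds in Λ: Σ_{E} ⟨E,E′⟩·E = 5·(−K) − 6·E′, where the sum runs over all line classes E. (Equivalently, 5·(−K) = 5·E′ + Σ_{E : ⟨E,E′⟩ = 1} E.) -/
def L : List Lam := [
  ![0, 1, 0, 0, 0, 0, 0],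
  ![0, 0, 1, 0, 0, 0, 0],
  ![0, 0, 0, 1, 0, 0, 0],
  ![0, 0, 0, 0, 1, 0, 0],
  ![0, 0, 0, 0, 0, 1, 0],
  ![0, 0, 0, 0, 0, 0, 1],
  ![1, -1, -1, 0, 0, 0, 0],
  ![1, -1, 0, -1, 0, 0, 0],
  ![1, -1, 0, 0, -1, 0, 0],
  ![1, -1, 0, 0, 0, -1, 0],
  ![1, -1, 0, 0, 0, 0, -1],
  ![1, 0, -1, -1, 0, 0, 0],
  ![1, 0, -1, 0, -1, 0, 0],
  ![1, 0, -1, 0, 0, -1, 0],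
  ![1, 0, -1, 0, 0, 0, -1],
  ![1, 0, 0, -1, -1, 0, 0],
  ![1, 0, 0, -1, 0, -1, 0],
  ![1, 0, 0, -1, 0, 0, -1],
  ![1, 0, 0, 0, -1, -1, 0],
  ![1, 0, 0, 0, -1, 0, -1],
  ![1, 0, 0, 0, 0, -1, -1],
  ![2, 0, -1, -1, -1, -1, -1],
  ![2, -1, 0, -1, -1, -1, -1],
  ![2, -1, -1, 0, -1, -1, -1],
  ![2, -1, -1, -1, 0, -1, -1],
  ![2, -1, -1, -1, -1, 0, -1],
  ![2, -1, -1, -1, -1, -1, 0]]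

lemma Lnodup : L.Nodup := by decide


lemma fs2 : (Fin.succ 2 : Fin 7) = 3 := rfl
lemma fs3 : (Fin.succ 3 : Fin 7) = 4 := rfl
lemma fs4 : (Fin.succ 4 : Fin 7) = 5 := rfl
lemma fs5 : (Fin.succ 5 : Fin 7) = 6 := rfl
lemma cv5 (a1 a2 a3 a4 a5 a6 : ℤ) : (![a1,a2,a3,a4,a5,a6] : Fin 6 → ℤ) 5 = a6 := rfl

lemma ip_lit (a0 a1 a2 a3 a4 a5 a6 : ℤ) (x : Lam) :
    ip ![a0,a1,a2,a3,a4,a5,a6] x =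
      a0 * x 0 - (a1 * x 1 + a2 * x 2 + a3 * x 3 + a4 * x 4 + a5 * x 5 + a6 * x 6) := by
  simp [ip, Fin.sum_univ_six, fs2, fs3, fs4, fs5, cv5]

lemma Lnd : L.Nodup := by decide

set_option maxHeartbeats 1000000 in
lemma Tsum (x : Lam) : ∑ E ∈ L.toFinset, ip E x • E = (-6 : ℤ) • x + (5 * ip x Kc) • Kc := by
  have hx : x = ![x 0, x 1, x 2, x 3, x 4, x 5, x 6] := by
    funext i; fin_cases i <;> rfl
  rw [List.sum_toFinset _ Lnd]
  show (L.map (fun E => ip E x • E)).sum = _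
  rw [show ip x Kc = -(x 0 * 3) - (x 1 + x 2 + x 3 + x 4 + x 5 + x 6) by
    simp [ip, Fin.sum_univ_six, Kc, fs2, fs3, fs4, fs5, cv5]]
  simp only [L, Kc, List.map_cons, List.map_nil, List.sum_cons, List.sum_nil, ip_lit]
  rw [hx]
  simp only [Matrix.smul_cons, Matrix.smul_empty, Matrix.cons_add_cons, Matrix.empty_add_empty,
    smul_eq_mul, add_zero]
  simp only [Matrix.vecCons, Fin.cons_inj, and_true]
  have hx2 : (Fin.cons (x 0) (Fin.cons (x 1) (Fin.cons (x 2) (Fin.cons (x 3) (Fin.cons (x 4)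
      (Fin.cons (x 5) (Fin.cons (x 6) (![] : Fin 0 → ℤ))))))) : Fin 7 → ℤ) = x := by
    funext i; fin_cases i <;> rfl
  simp only [hx2]
  and_intros <;> ring

lemma cs5 (b2 b3 b4 b5 b6 : ℤ) :
    (b2+b3+b4+b5+b6)^2 ≤ 5*(b2*b2+b3*b3+b4*b4+b5*b5+b6*b6) := by
  nlinarith [sq_nonneg (b2-b3), sq_nonneg (b2-b4), sq_nonneg (b2-b5), sq_nonneg (b2-b6),
      sq_nonneg (b3-b4), sq_nonneg (b3-b5), sq_nonneg (b3-b6),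
      sq_nonneg (b4-b5), sq_nonneg (b4-b6), sq_nonneg (b5-b6)]

lemma cs6 (b1 b2 b3 b4 b5 b6 : ℤ) :
    (b1+b2+b3+b4+b5+b6)^2 ≤ 6*(b1*b1+b2*b2+b3*b3+b4*b4+b5*b5+b6*b6) := by
  nlinarith [sq_nonneg (b1-b2), sq_nonneg (b1-b3), sq_nonneg (b1-b4), sq_nonneg (b1-b5), sq_nonneg (b1-b6),
      sq_nonneg (b2-b3), sq_nonneg (b2-b4), sq_nonneg (b2-b5), sq_nonneg (b2-b6),
      sq_nonneg (b3-b4), sq_nonneg (b3-b5), sq_nonneg (b3-b6),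
      sq_nonneg (b4-b5), sq_nonneg (b4-b6), sq_nonneg (b5-b6)]

lemma abound (a b1 b2 b3 b4 b5 b6 : ℤ)
    (h1 : a*a - (b1*b1 + b2*b2 + b3*b3 + b4*b4 + b5*b5 + b6*b6) = -1)
    (h2 : -(a*3) - (b1 + b2 + b3 + b4 + b5 + b6) = -1) :
    0 ≤ a ∧ a ≤ 2 := by
  have h := cs6 b1 b2 b3 b4 b5 b6
  constructor
  · nlinarith [sq_nonneg (a+1), h]
  · nlinarith [sq_nonneg (a-3), h]

lemma bbound_s13 (a c b2 b3 b4 b5 b6 : ℤ)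
    (h1 : a*a - (c*c + b2*b2 + b3*b3 + b4*b4 + b5*b5 + b6*b6) = -1)
    (h2 : -(a*3) - (c + b2 + b3 + b4 + b5 + b6) = -1)
    (ha0 : 0 ≤ a) (ha2 : a ≤ 2) :
    -1 ≤ c ∧ c ≤ 1 := by
  have h := cs5 b2 b3 b4 b5 b6
  constructor
  · by_contra hc
    push_neg at hc
    have hd : 0 ≤ -c - 2 := by linarith
    nlinarith [h, sq_nonneg (c+2), mul_nonneg (by linarith : (0:ℤ) ≤ 2 - a) hd, sq_nonneg (2*a-4), mul_nonneg ha0 ha0]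
  · by_contra hc
    push_neg at hc
    have hd : 0 ≤ c - 2 := by linarith
    nlinarith [h, sq_nonneg (c-2), mul_nonneg ha0 hd, mul_nonneg ha0 ha0]


def l3 : List ℤ := [-1, 0, 1]

set_option maxHeartbeats 1000000 in
lemma enum : ∀ a ∈ ([0,1,2] : List ℤ), ∀ b1 ∈ l3, ∀ b2 ∈ l3, ∀ b3 ∈ l3, ∀ b4 ∈ l3, ∀ b5 ∈ l3, ∀ b6 ∈ l3,
    (a*a - (b1*b1+b2*b2+b3*b3+b4*b4+b5*b5+b6*b6) = -1 ∧ -(a*3) - (b1+b2+b3+b4+b5+b6) = -1) →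
    (![a,b1,b2,b3,b4,b5,b6] : Lam) ∈ L := by decide


lemma classify (x : Lam) (h : IsLine x) : x ∈ L := by
  obtain ⟨h1, h2⟩ := h
  have h1' : x 0 * x 0 - (x 1 * x 1 + x 2 * x 2 + x 3 * x 3 + x 4 * x 4 + x 5 * x 5 + x 6 * x 6) = -1 := by
    simpa [ip, Fin.sum_univ_six, fs2, fs3, fs4, fs5] using h1
  have h2' : -(x 0 * 3) - (x 1 + x 2 + x 3 + x 4 + x 5 + x 6) = -1 := by
    simpa [ip, Fin.sum_univ_six, Kc, fs2, fs3, fs4, fs5,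
      show (![1,1,1,1,1,1] : Fin 6 → ℤ) 5 = 1 from rfl] using h2
  obtain ⟨ha0, ha2⟩ := abound _ _ _ _ _ _ _ h1' h2'
  have hb1 := bbound_s13 (x 0) (x 1) (x 2) (x 3) (x 4) (x 5) (x 6)
    (by linear_combination h1') (by linear_combination h2') ha0 ha2
  have hb2 := bbound_s13 (x 0) (x 2) (x 1) (x 3) (x 4) (x 5) (x 6)
    (by linear_combination h1') (by linear_combination h2') ha0 ha2
  have hb3 := bbound_s13 (x 0) (x 3) (x 1) (x 2) (x 4) (x 5) (x 6)
    (by linear_combination h1') (by linear_combination h2') ha0 ha2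
  have hb4 := bbound_s13 (x 0) (x 4) (x 1) (x 2) (x 3) (x 5) (x 6)
    (by linear_combination h1') (by linear_combination h2') ha0 ha2
  have hb5 := bbound_s13 (x 0) (x 5) (x 1) (x 2) (x 3) (x 4) (x 6)
    (by linear_combination h1') (by linear_combination h2') ha0 ha2
  have hb6 := bbound_s13 (x 0) (x 6) (x 1) (x 2) (x 3) (x 4) (x 5)
    (by linear_combination h1') (by linear_combination h2') ha0 ha2
  have hx : x = ![x 0, x 1, x 2, x 3, x 4, x 5, x 6] := by
    funext i; fin_cases i <;> rfl
  rw [hx]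
  exact enum (x 0) (by simp; omega) (x 1) (by simp [l3]; omega) (x 2) (by simp [l3]; omega)
    (x 3) (by simp [l3]; omega) (x 4) (by simp [l3]; omega) (x 5) (by simp [l3]; omega)
    (x 6) (by simp [l3]; omega) ⟨h1', h2'⟩

instance inst_s13 : DecidablePred IsLine := fun x => by unfold IsLine ip; infer_instance

lemma line_iff (x : Lam) : IsLine x ↔ x ∈ L :=
  ⟨classify x, fun h => by revert x h; decide⟩


lemma pairs : ∀ x ∈ L, ∀ y ∈ L, x ≠ y → ip x y = 0 ∨ ip x y = 1 := by decide

lemma ip_self : ∀ x ∈ L, ip x x = -1 := by decide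

lemma setL : {E : Lam | IsLine E} = ↑L.toFinset := by
  ext x
  simp [line_iff, List.mem_toFinset]

lemma split_sum (E' : Lam) (hE' : IsLine E') :
    ∑ E ∈ L.toFinset, ip E E' • E =
      -E' + ∑ E ∈ L.toFinset.filter (fun E => ip E E' = 1), E := by
  have hE'L : E' ∈ L.toFinset := List.mem_toFinset.2 (classify E' hE')
  rw [← Finset.add_sum_erase _ _ hE'L, hE'.1]
  congr 1
  · funext i; simp
  · have h1 : ∀ E ∈ L.toFinset.erase E', ip E E' • E =
        if ip E E' = 1 then E else 0 := by
      intro E hE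
      obtain ⟨hne, hEL⟩ := Finset.mem_erase.1 hE
      rcases pairs E (List.mem_toFinset.1 hEL) E' (List.mem_toFinset.1 hE'L) hne with h | h <;>
        simp [h]
    rw [Finset.sum_congr rfl h1, ← Finset.sum_filter, Finset.filter_erase,
      Finset.erase_eq_of_notMem]
    simp [hE'.1]


/-- For every line class E': Σ_{E line} ⟨E,E'⟩·E = 5(−K) − 6E'; equivalently
5(−K) = 5E' + Σ_{E line, ⟨E,E'⟩ = 1} E. -/
theorem line_sum_identity :
    {E : Lam | IsLine E}.Finite ∧
    ∀ E' : Lam, IsLine E' →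
      (∑ᶠ E ∈ {E : Lam | IsLine E}, ip E E' • E = (5 : ℤ) • (-Kc) - (6 : ℤ) • E') ∧
      ((5 : ℤ) • (-Kc) = (5 : ℤ) • E' + ∑ᶠ E ∈ {E : Lam | IsLine E ∧ ip E E' = 1}, E) := by
  refine ⟨by rw [setL]; exact (L.toFinset).finite_toSet, fun E' hE' => ?_⟩
  have key : ∑ E ∈ L.toFinset, ip E E' • E = (-6 : ℤ) • E' + (-5 : ℤ) • Kc := by
    rw [Tsum E', hE'.2]; norm_num
  have hmain : ∑ᶠ E ∈ {E : Lam | IsLine E}, ip E E' • E = (5 : ℤ) • (-Kc) - (6 : ℤ) • E' := by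
    rw [setL, finsum_mem_coe_finset, key]
    module
  refine ⟨hmain, ?_⟩
  have hset2 : {E : Lam | IsLine E ∧ ip E E' = 1} =
      ↑(L.toFinset.filter (fun E => ip E E' = 1)) := by
    ext x
    simp [line_iff, List.mem_toFinset]
  rw [hset2, finsum_mem_coe_finset]
  have h2 := split_sum E' hE'
  rw [key] at h2
  have h3 : ∑ E ∈ L.toFinset.filter (fun E => ip E E' = 1), E =
      (-6 : ℤ) • E' + (-5 : ℤ) • Kc + E' := by
    have h4 : -E' + ∑ E ∈ L.toFinset.filter (fun E => ip E E' = 1), E =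
        -E' + ((-6 : ℤ) • E' + (-5 : ℤ) • Kc + E') := by rw [← h2]; module
    exact add_left_cancel h4
  rw [h3]
  module
end
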